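/- Let a be real and λ > 0, and set β = ia/(2√λ). For ℓ = 1, the expression r₁(λ)/3 := b·∑_{j=1}^{1} 1/(j-β) + c + b·i√λ/a equals -aλ/36, where b = (-2i√λ)³·(-1-β)₃/(3!)² and c = ((i√λ)³/3!)·∑_{k=0}^{2} 2^k·(-1-β)_k/(k!(3-k)). In particular this expression is real. -/

import Mathlib

open Finset Complex

/-!
With `s = √λ`, the definition `β = ia/(2s)` gives `a = -2isβ`, so every term is a polynomial
in `s` and `β` except for the factor `1/(1-β)` and the division by `a`. Evaluating the
Pochhammer symbols gives `b = 2is³β(1-β²)/9` and `c = -(is³/6)(2β² + β - 2/3)`; then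
`1 - β` cancels from `b/(1-β)`, and the whole expression collapses to `is³β/18 = -as²/36`.
It is defined because `β` is purely imaginary, so `β ≠ 1`.
-/

lemma one_sub_I_mul_ofReal_ne_zero (x : ℝ) : 1 - I * x ≠ 0 := by
  intro h
  simpa using congrArg re h

lemma rOne_b_eq (s β : ℂ) :
    (-2 * I * s) ^ 3 * (ascPochhammer ℂ 3).eval (-1 - β) / (Nat.factorial 3 : ℂ) ^ 2 =
      2 * I * s ^ 3 * β * (1 - β ^ 2) / 9 := by
  simp only [ascPochhammer_succ_eval, ascPochhammer_zero, Polynomial.eval_one, Nat.factorial]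
  push_cast
  linear_combination (-(8 : ℂ) / 36 * I * s ^ 3 * β * (1 - β ^ 2)) * I_sq

lemma rOne_c_eq (s β : ℂ) :
    (I * s) ^ 3 / (Nat.factorial 3 : ℂ) *
      ∑ k ∈ range 3, 2 ^ k * (ascPochhammer ℂ k).eval (-1 - β) /
        ((Nat.factorial k : ℂ) * ((3 : ℂ) - (k : ℂ))) =
      -(I * s ^ 3 / 6) * (-2 / 3 + β + 2 * β ^ 2) := by
  simp only [sum_range_succ, sum_range_zero, ascPochhammer_succ_eval, ascPochhammer_zero,
    Polynomial.eval_one, Nat.factorial]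
  push_cast
  linear_combination (s ^ 3 / 6 * I * (-2 / 3 + β + 2 * β ^ 2)) * I_sq

theorem rOne_eq (a s : ℂ) (hs : s ≠ 0) (ha : a ≠ 0) (h1 : 1 - I * a / (2 * s) ≠ 0) :
    let β : ℂ := I * a / (2 * s)
    let b : ℂ := (-2 * I * s) ^ 3 * (ascPochhammer ℂ 3).eval (-1 - β) /
      ((Nat.factorial 3 : ℂ)) ^ 2
    let c : ℂ := (I * s) ^ 3 / (Nat.factorial 3 : ℂ) *
      ∑ k ∈ range 3, 2 ^ k * (ascPochhammer ℂ k).eval (-1 - β) /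
        ((Nat.factorial k : ℂ) * ((3 : ℂ) - (k : ℂ)))
    b * (∑ j ∈ Icc (1 : ℕ) 1, 1 / ((j : ℂ) - β)) + c + b * I * s / a = -(a * s ^ 2) / 36 := by
  intro β b c
  have ha_eq : a = -2 * I * s * β := by
    simp only [β]; field_simp; linear_combination I_sq
  have h1 : 1 - β ≠ 0 := h1
  clear_value β
  subst ha_eq
  simp only [b, c, rOne_b_eq, rOne_c_eq, Icc_self, sum_singleton, Nat.cast_one]
  have hβ : β ≠ 0 := by rintro rfl; simp at ha
  field_simp
  ring

/-- the ℓ = 1 case of equation (2.1):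
`b·∑_{j=1}^{1} 1/(j-β) + c + b·i√λ/a = -aλ/36`, in particular a real number. -/
theorem stmt_6 (a lam : ℝ) (hlam : 0 < lam) (ha : a ≠ 0) :
    let sl : ℂ := (Real.sqrt lam : ℂ)
    let β : ℂ := Complex.I * (a : ℂ) / (2 * sl)
    let b : ℂ := (-2 * Complex.I * sl) ^ 3 * (ascPochhammer ℂ 3).eval (-1 - β) /
      ((Nat.factorial 3 : ℂ)) ^ 2
    let c : ℂ := (Complex.I * sl) ^ 3 / (Nat.factorial 3 : ℂ) *
      ∑ k ∈ range 3, 2 ^ k * (ascPochhammer ℂ k).eval (-1 - β) /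
        ((Nat.factorial k : ℂ) * ((3 : ℂ) - (k : ℂ)))
    b * (∑ j ∈ Icc (1 : ℕ) 1, 1 / ((j : ℂ) - β)) + c + b * Complex.I * sl / (a : ℂ) =
      ((-(a * lam) / 36 : ℝ) : ℂ) := by
  intro sl β b c
  have hsl : sl ≠ 0 := ofReal_ne_zero.mpr (Real.sqrt_pos.mpr hlam).ne'
  have hβ : 1 - β ≠ 0 := by
    have : β = I * ((a / (2 * Real.sqrt lam) : ℝ) : ℂ) := by push_cast; ring
    exact this ▸ one_sub_I_mul_ofReal_ne_zero _
  refine (rOne_eq (a : ℂ) sl hsl (ofReal_ne_zero.mpr ha) hβ).trans ?_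
  rw [← ofReal_pow, Real.sq_sqrt hlam.le]
  push_cast
  ring
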